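/- If λ ≥ 2μZ_f², then for any minimizer α* of the sketched program, the approximate solution x̃ = −λ⁻¹Aᵀ∇f(ASα*) satisfies ‖x̃ − x*‖₂ ≤ √(μ/(2λ)) · ‖P_S^⊥ Aᵀ‖₂ · ‖x*‖₂, where ‖·‖₂ on matrices denotes the spectral norm. -/

import Mathlib

/-!
Write `Δ = ∇f(ASα*) - ∇f(Ax*)` and `w = AᵀΔ`. The two optimality conditions give
`x̃ - x* = -λ⁻¹ w` and `P w = λ (P x* - Sα*)`, so co-coercivity of `∇f`,
`‖Δ‖² ≤ μ ⟨w, Sα* - x*⟩`, becomes `λ‖Δ‖² + μ‖P w‖² ≤ λμ ‖P⊥w‖ ‖P⊥x*‖`. Because `∇f(ASα*)`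
lies in `dom f*`, the definition of `Z_f` gives `‖P⊥w‖ ≤ Z_f ‖Δ‖`, and with `λ ≥ 2μZ_f²`
completing the square in `‖Δ‖` yields `‖w‖² ≤ (λμ/2) Z_f² ‖P⊥x*‖²`. Finally
`Z_f ≤ ‖P⊥Aᵀ‖₂` and `‖P⊥x*‖ ≤ ‖x*‖`.
-/

open Matrix Finset Real Set

noncomputable section

namespace Sketch

/-- The ℓ2 norm of a vector in `Fin k → ℝ`. -/
def norm2 {k : ℕ} (x : Fin k → ℝ) : ℝ := Real.sqrt (∑ i, x i ^ 2)

/-- The continuous linear functional `v ↦ ⟨w, v⟩`; used to state that a function has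
gradient `w` at a point. -/
def dotCLM {k : ℕ} (w : Fin k → ℝ) : (Fin k → ℝ) →L[ℝ] ℝ :=
  LinearMap.toContinuousLinearMap
    { toFun := fun v => w ⬝ᵥ v
      map_add' := fun a b => dotProduct_add w a b
      map_smul' := fun c a => by
        simp [dotProduct, Finset.mul_sum, mul_left_comm] }

/-- The domain of the Fenchel conjugate `f*`. -/
def fenchelDom {k : ℕ} (f : (Fin k → ℝ) → ℝ) : Set (Fin k → ℝ) :=
  {z | BddAbove (Set.range fun w => w ⬝ᵥ z - f w)}

/-- The Fenchel conjugate `f*(z) = sup_w (⟨w, z⟩ - f(w))` (as a real-valued supremum,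
meaningful on `fenchelDom f`). -/
def fenchel {k : ℕ} (f : (Fin k → ℝ) → ℝ) (z : Fin k → ℝ) : ℝ :=
  ⨆ w, (w ⬝ᵥ z - f w)

/-- The subdifferential of the Fenchel conjugate `f*` at `z`. -/
def fenchelSubdiff {k : ℕ} (f : (Fin k → ℝ) → ℝ) (z : Fin k → ℝ) : Set (Fin k → ℝ) :=
  {g | ∀ y ∈ fenchelDom f, fenchel f z + g ⬝ᵥ (y - z) ≤ fenchel f y}

/-- `P` is the orthogonal projector onto the range (column space) of `S`. -/
def IsOrthProj {q m : ℕ} (S : Matrix (Fin q) (Fin m) ℝ) (P : Matrix (Fin q) (Fin q) ℝ) : Prop :=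
  Pᵀ = P ∧ P * P = P ∧ P * S = S ∧ ∃ C : Matrix (Fin m) (Fin q) ℝ, P = S * C

/-- The quantity `Z_f`: the supremum of `(Δᵀ B P⊥ Bᵀ Δ)^{1/2} / ‖Δ‖₂` over nonzero
`Δ ∈ dom f* - z*`. -/
def Zf {k q : ℕ} (f : (Fin k → ℝ) → ℝ) (B : Matrix (Fin k) (Fin q) ℝ)
    (Pperp : Matrix (Fin q) (Fin q) ℝ) (zs : Fin k → ℝ) : ℝ :=
  sSup {r | ∃ Δ : Fin k → ℝ, Δ ≠ 0 ∧ zs + Δ ∈ fenchelDom f ∧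
    r = Real.sqrt (Δ ⬝ᵥ (B * Pperp * Bᵀ).mulVec Δ) / norm2 Δ}

/-- The spectral norm (largest singular value) of a matrix. -/
def specNorm {a b : ℕ} (M : Matrix (Fin a) (Fin b) ℝ) : ℝ :=
  sSup {r | ∃ v : Fin b → ℝ, norm2 v = 1 ∧ r = norm2 (M.mulVec v)}

/-- The eigenvalues of `A * Aᵀ` (i.e. the squared singular values of `A`),
sorted in decreasing order. -/
def eigsDesc {n d : ℕ} (A : Matrix (Fin n) (Fin d) ℝ) : Fin n → ℝ := fun i =>
  ((Matrix.isHermitian_mul_conjTranspose_self A).eigenvalues ∘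
    Tuple.sort (Matrix.isHermitian_mul_conjTranspose_self A).eigenvalues) i.rev

/-- The spectral tail `R_k(A) = (σ_k² + (1/k) ∑_{j=k+1}^ρ σ_j²)^{1/2}`. -/
def Rk {n d : ℕ} (A : Matrix (Fin n) (Fin d) ℝ) (k : ℕ) : ℝ :=
  Real.sqrt ((∑ j : Fin n, if (j : ℕ) + 1 = k then eigsDesc A j else 0)
    + (1 / (k : ℝ)) * ∑ j : Fin n, if k ≤ (j : ℕ) then eigsDesc A j else 0)

/-- Product measure on `n × m` matrices with i.i.d. standard Gaussian entries. -/
def gaussMatrix (n m : ℕ) : MeasureTheory.Measure (Fin n → Fin m → ℝ) :=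
  MeasureTheory.Measure.pi fun _ => MeasureTheory.Measure.pi fun _ =>
    ProbabilityTheory.gaussianReal 0 1


/-- The largest eigenvalue (Rayleigh quotient supremum) of a symmetric matrix. -/
def eigMax {q : ℕ} (M : Matrix (Fin q) (Fin q) ℝ) : ℝ :=
  sSup {r | ∃ v : Fin q → ℝ, norm2 v = 1 ∧ r = v ⬝ᵥ M.mulVec v}

/-- The smallest eigenvalue (Rayleigh quotient infimum) of a symmetric matrix. -/
def eigMin {q : ℕ} (M : Matrix (Fin q) (Fin q) ℝ) : ℝ :=
  sInf {r | ∃ v : Fin q → ℝ, norm2 v = 1 ∧ r = v ⬝ᵥ M.mulVec v}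


section Norm2

variable {k : ℕ}

lemma norm2_eq_norm_toLp (x : Fin k → ℝ) : norm2 x = ‖WithLp.toLp 2 x‖ := by
  simp [norm2, EuclideanSpace.norm_eq]

lemma norm2_nonneg (x : Fin k → ℝ) : 0 ≤ norm2 x := Real.sqrt_nonneg _

lemma norm2_sq (x : Fin k → ℝ) : norm2 x ^ 2 = x ⬝ᵥ x := by
  rw [norm2, Real.sq_sqrt (by positivity)]
  simp [dotProduct, sq]

lemma norm2_smul (c : ℝ) (x : Fin k → ℝ) : norm2 (c • x) = |c| * norm2 x := by
  simp [norm2_eq_norm_toLp, norm_smul]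

lemma norm2_pos {x : Fin k → ℝ} (hx : x ≠ 0) : 0 < norm2 x := by
  simpa [norm2_eq_norm_toLp] using hx

lemma abs_dotProduct_le_norm2_mul_norm2 (x y : Fin k → ℝ) : |x ⬝ᵥ y| ≤ norm2 x * norm2 y := by
  simpa [norm2_eq_norm_toLp, EuclideanSpace.inner_toLp_toLp, dotProduct_comm]
    using abs_real_inner_le_norm (WithLp.toLp 2 x) (WithLp.toLp 2 y)

end Norm2

section Spectral

variable {a b : ℕ}

lemma norm2_mulVec_le_opNorm (M : Matrix (Fin a) (Fin b) ℝ) (v : Fin b → ℝ) :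
    norm2 (M *ᵥ v) ≤ ‖(Matrix.toEuclideanLin M).toContinuousLinearMap‖ * norm2 v := by
  simpa [norm2_eq_norm_toLp]
    using (Matrix.toEuclideanLin M).toContinuousLinearMap.le_opNorm (WithLp.toLp 2 v)

lemma specNorm_nonneg (M : Matrix (Fin a) (Fin b) ℝ) : 0 ≤ specNorm M :=
  Real.sSup_nonneg fun _ ⟨_, _, hr⟩ => hr ▸ norm2_nonneg _

lemma norm2_mulVec_le_specNorm (M : Matrix (Fin a) (Fin b) ℝ) (v : Fin b → ℝ) :
    norm2 (M *ᵥ v) ≤ specNorm M * norm2 v := by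
  rcases eq_or_ne v 0 with rfl | hv
  · simp [norm2]
  have hbdd : BddAbove {r | ∃ v : Fin b → ℝ, norm2 v = 1 ∧ r = norm2 (M *ᵥ v)} :=
    ⟨_, fun r ⟨u, hu, hr⟩ => hr ▸ (norm2_mulVec_le_opNorm M u).trans_eq (by rw [hu, mul_one])⟩
  have hv' := norm2_pos hv
  have hunit : norm2 ((norm2 v)⁻¹ • v) = 1 := by
    rw [norm2_smul, abs_of_pos (inv_pos.2 hv'), inv_mul_cancel₀ hv'.ne']
  have hle := le_csSup hbdd ⟨_, hunit, rfl⟩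
  rw [mulVec_smul, norm2_smul, abs_of_pos (inv_pos.2 hv'), inv_mul_le_iff₀ hv'] at hle
  rwa [mul_comm] at hle

end Spectral

section SmoothConvex

variable {k : ℕ} {f : (Fin k → ℝ) → ℝ} {f' : (Fin k → ℝ) → Fin k → ℝ} {μ : ℝ}

open AffineMap

lemma hasDerivAt_comp_lineMap (hdiff : ∀ w, HasFDerivAt f (dotCLM (f' w)) w)
    (x y : Fin k → ℝ) (t : ℝ) :
    HasDerivAt (fun t => f (lineMap x y t)) (f' (lineMap x y t) ⬝ᵥ (y - x)) t :=
  (hdiff _).comp_hasDerivAt t hasDerivAt_lineMap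

lemma add_dotProduct_sub_le_of_convexOn (hconv : ConvexOn ℝ univ f)
    (hdiff : ∀ w, HasFDerivAt f (dotCLM (f' w)) w) (x y : Fin k → ℝ) :
    f x + f' x ⬝ᵥ (y - x) ≤ f y := by
  have hline := (hconv.comp_affineMap (lineMap x y)).le_slope_of_hasDerivAt (mem_univ 0)
    (mem_univ 1) zero_lt_one (hasDerivAt_comp_lineMap hdiff x y 0)
  simp only [slope_def_field, Function.comp_def, lineMap_apply_zero, lineMap_apply_one,
    sub_zero, div_one] at hline
  linarith

lemma le_add_dotProduct_sub_add_sq (hdiff : ∀ w, HasFDerivAt f (dotCLM (f' w)) w)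
    (hsmooth : ∀ w v, norm2 (f' w - f' v) ≤ μ * norm2 (w - v)) (x y : Fin k → ℝ) :
    f y ≤ f x + f' x ⬝ᵥ (y - x) + μ / 2 * norm2 (y - x) ^ 2 := by
  set c := f' x ⬝ᵥ (y - x)
  set r := norm2 (y - x)
  have hderiv : ∀ t, HasDerivAt (fun t => f (lineMap x y t) - t * c - μ / 2 * t ^ 2 * r ^ 2)
      (f' (lineMap x y t) ⬝ᵥ (y - x) - c - μ * t * r ^ 2) t := fun t => by
    refine (((hasDerivAt_comp_lineMap hdiff x y t).fun_sub (hasDerivAt_mul_const c)).fun_sub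
      (((hasDerivAt_pow 2 t).const_mul (μ / 2)).mul_const (r ^ 2))).congr_deriv ?_
    simp only [Nat.cast_ofNat, Nat.add_one_sub_one, pow_one]
    ring
  have hslope : ∀ t, 0 ≤ t → f' (lineMap x y t) ⬝ᵥ (y - x) - c ≤ μ * t * r ^ 2 := by
    intro t ht
    calc f' (lineMap x y t) ⬝ᵥ (y - x) - c = (f' (lineMap x y t) - f' x) ⬝ᵥ (y - x) := by
          rw [sub_dotProduct]
      _ ≤ norm2 (f' (lineMap x y t) - f' x) * r :=
          (le_abs_self _).trans (abs_dotProduct_le_norm2_mul_norm2 _ _)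
      _ ≤ μ * norm2 (lineMap x y t - x) * r := by
          gcongr
          · exact norm2_nonneg _
          · exact hsmooth _ _
      _ = μ * t * r ^ 2 := by
          rw [lineMap_apply_module', add_sub_cancel_right, norm2_smul, abs_of_nonneg ht]
          ring
  have hanti : AntitoneOn (fun t => f (lineMap x y t) - t * c - μ / 2 * t ^ 2 * r ^ 2) (Ici 0) :=
    antitoneOn_of_hasDerivWithinAt_nonpos (convex_Ici 0)
      (fun t _ => (hderiv t).continuousAt.continuousWithinAt)
      (fun t _ => (hderiv t).hasDerivWithinAt)
      (fun t ht => by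
        rw [interior_Ici] at ht
        linarith [hslope t ht.le])
  have h01 := hanti (mem_Ici.2 le_rfl) (mem_Ici.2 zero_le_one) zero_le_one
  simp only [lineMap_apply_zero, lineMap_apply_one] at h01
  linarith

lemma sq_div_le_bregman (hconv : ConvexOn ℝ univ f)
    (hdiff : ∀ w, HasFDerivAt f (dotCLM (f' w)) w)
    (hsmooth : ∀ w v, norm2 (f' w - f' v) ≤ μ * norm2 (w - v)) (hμ : 0 < μ) (p q : Fin k → ℝ) :
    norm2 (f' p - f' q) ^ 2 / (2 * μ) ≤ f p - f q - f' q ⬝ᵥ (p - q) := by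
  set d := f' p - f' q
  -- bound `f` at the gradient step `p - μ⁻¹ d` from below (convexity at `q`) and above (at `p`)
  have hlow := add_dotProduct_sub_le_of_convexOn hconv hdiff q (p - μ⁻¹ • d)
  have hup := le_add_dotProduct_sub_add_sq hdiff hsmooth p (p - μ⁻¹ • d)
  have hd : f' p ⬝ᵥ d - f' q ⬝ᵥ d = norm2 d ^ 2 := by rw [norm2_sq, ← sub_dotProduct]
  rw [sub_sub_cancel_left, ← neg_smul, norm2_smul, abs_neg, abs_of_pos (inv_pos.2 hμ)] at hup
  have hquad : μ / 2 * (μ⁻¹ * norm2 d) ^ 2 = norm2 d ^ 2 / (2 * μ) := by field_simp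
  simp only [dotProduct_sub, dotProduct_smul, smul_eq_mul] at hlow hup ⊢
  linear_combination hlow + hup + hquad - μ⁻¹ * hd

lemma norm2_sub_sq_le_mul_dotProduct (hconv : ConvexOn ℝ univ f)
    (hdiff : ∀ w, HasFDerivAt f (dotCLM (f' w)) w)
    (hsmooth : ∀ w v, norm2 (f' w - f' v) ≤ μ * norm2 (w - v)) (hμ : 0 < μ) (u v : Fin k → ℝ) :
    norm2 (f' u - f' v) ^ 2 ≤ μ * ((f' u - f' v) ⬝ᵥ (u - v)) := by
  have huv := sq_div_le_bregman hconv hdiff hsmooth hμ u v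
  have hvu := sq_div_le_bregman hconv hdiff hsmooth hμ v u
  rw [← neg_sub, ← neg_one_smul ℝ (f' u - f' v), norm2_smul, abs_neg, abs_one, one_mul] at hvu
  have hsum : norm2 (f' u - f' v) ^ 2 / μ ≤ (f' u - f' v) ⬝ᵥ (u - v) := by
    have hdot : (f' u - f' v) ⬝ᵥ (u - v) = -(f' u ⬝ᵥ (v - u)) - f' v ⬝ᵥ (u - v) := by
      rw [sub_dotProduct, ← neg_sub v u, dotProduct_neg]
    have hhalf : norm2 (f' u - f' v) ^ 2 / μ
        = norm2 (f' u - f' v) ^ 2 / (2 * μ) + norm2 (f' u - f' v) ^ 2 / (2 * μ) := by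
      field_simp; ring
    linarith
  rwa [div_le_iff₀' hμ] at hsum

lemma gradient_mem_fenchelDom (hconv : ConvexOn ℝ univ f)
    (hdiff : ∀ w, HasFDerivAt f (dotCLM (f' w)) w) (x : Fin k → ℝ) :
    f' x ∈ fenchelDom f := by
  refine ⟨x ⬝ᵥ f' x - f x, ?_⟩
  rintro _ ⟨w, rfl⟩
  have := add_dotProduct_sub_le_of_convexOn hconv hdiff x w
  rw [dotProduct_sub, dotProduct_comm (f' x) w, dotProduct_comm (f' x) x] at this
  linarith

end SmoothConvex

section Projection

variable {q : ℕ} {P : Matrix (Fin q) (Fin q) ℝ}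

lemma mulVec_dotProduct_of_isSymm (hsymm : P.IsSymm) (x y : Fin q → ℝ) :
    P *ᵥ x ⬝ᵥ y = x ⬝ᵥ P *ᵥ y := by
  rw [dotProduct_mulVec, ← mulVec_transpose, hsymm]

lemma mulVec_dotProduct_mulVec_of_isSymm (hsymm : P.IsSymm) (hidem : IsIdempotentElem P)
    (x y : Fin q → ℝ) : P *ᵥ x ⬝ᵥ P *ᵥ y = x ⬝ᵥ P *ᵥ y := by
  rw [mulVec_dotProduct_of_isSymm hsymm, mulVec_mulVec, hidem.eq]

lemma norm2_sq_eq_add_of_isSymm (hsymm : P.IsSymm) (hidem : IsIdempotentElem P)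
    (x : Fin q → ℝ) : norm2 x ^ 2 = norm2 (P *ᵥ x) ^ 2 + norm2 ((1 - P) *ᵥ x) ^ 2 := by
  rw [norm2_sq, norm2_sq, norm2_sq, sub_mulVec, one_mulVec,
    mulVec_dotProduct_mulVec_of_isSymm hsymm hidem, sub_dotProduct, dotProduct_sub,
    dotProduct_sub, mulVec_dotProduct_mulVec_of_isSymm hsymm hidem, dotProduct_comm (P *ᵥ x) x]
  ring

lemma norm2_one_sub_mulVec_le (hsymm : P.IsSymm) (hidem : IsIdempotentElem P)
    (x : Fin q → ℝ) : norm2 ((1 - P) *ᵥ x) ≤ norm2 x := by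
  have := norm2_sq_eq_add_of_isSymm hsymm hidem x
  nlinarith [norm2_nonneg ((1 - P) *ᵥ x), norm2_nonneg x, sq_nonneg (norm2 (P *ᵥ x))]

end Projection

namespace IsOrthProj

variable {q m : ℕ} {S : Matrix (Fin q) (Fin m) ℝ} {P : Matrix (Fin q) (Fin q) ℝ}

lemma mulVec_mulVec_self (hP : IsOrthProj S P) (α : Fin m → ℝ) : P *ᵥ (S *ᵥ α) = S *ᵥ α := by
  rw [mulVec_mulVec, hP.2.2.1]

lemma mulVec_eq_zero (hP : IsOrthProj S P) {v : Fin q → ℝ} (hv : Sᵀ *ᵥ v = 0) : P *ᵥ v = 0 := by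
  obtain ⟨hsymm, -, -, C, hC⟩ := hP
  rw [← hsymm, hC, transpose_mul, ← mulVec_mulVec, hv, mulVec_zero]

end IsOrthProj

section Zf

variable {k q : ℕ} {f : (Fin k → ℝ) → ℝ} {B : Matrix (Fin k) (Fin q) ℝ}
  {Q : Matrix (Fin q) (Fin q) ℝ}

lemma sqrt_dotProduct_mulVec_eq_norm2 (hsymm : Q.IsSymm) (hidem : IsIdempotentElem Q)
    (Δ : Fin k → ℝ) : √(Δ ⬝ᵥ (B * Q * Bᵀ) *ᵥ Δ) = norm2 ((Q * Bᵀ) *ᵥ Δ) := by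
  rw [← mulVec_mulVec, ← mulVec_mulVec, ← mulVec_mulVec, dotProduct_mulVec, ← mulVec_transpose,
    ← mulVec_dotProduct_mulVec_of_isSymm hsymm hidem, ← norm2_sq, Real.sqrt_sq (norm2_nonneg _)]

lemma sqrt_dotProduct_mulVec_div_le_specNorm (hsymm : Q.IsSymm) (hidem : IsIdempotentElem Q)
    (Δ : Fin k → ℝ) : √(Δ ⬝ᵥ (B * Q * Bᵀ) *ᵥ Δ) / norm2 Δ ≤ specNorm (Q * Bᵀ) := by
  rw [sqrt_dotProduct_mulVec_eq_norm2 hsymm hidem]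
  rcases eq_or_ne Δ 0 with rfl | hΔ
  · simpa [norm2] using specNorm_nonneg (Q * Bᵀ)
  rw [div_le_iff₀ (norm2_pos hΔ)]
  exact norm2_mulVec_le_specNorm _ _

lemma Zf_nonneg (zs : Fin k → ℝ) : 0 ≤ Zf f B Q zs :=
  Real.sSup_nonneg fun _ ⟨_, _, _, hr⟩ => hr ▸ div_nonneg (Real.sqrt_nonneg _) (norm2_nonneg _)

lemma Zf_le_specNorm (hsymm : Q.IsSymm) (hidem : IsIdempotentElem Q) (zs : Fin k → ℝ) :
    Zf f B Q zs ≤ specNorm (Q * Bᵀ) :=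
  Real.sSup_le (fun _ ⟨Δ, _, _, hr⟩ => hr ▸ sqrt_dotProduct_mulVec_div_le_specNorm hsymm hidem Δ)
    (specNorm_nonneg _)

lemma norm2_mulVec_le_Zf_mul (hsymm : Q.IsSymm) (hidem : IsIdempotentElem Q) {zs Δ : Fin k → ℝ}
    (hΔ : zs + Δ ∈ fenchelDom f) : norm2 ((Q * Bᵀ) *ᵥ Δ) ≤ Zf f B Q zs * norm2 Δ := by
  rcases eq_or_ne Δ 0 with rfl | hΔ0
  · simp [norm2]
  have hle : √(Δ ⬝ᵥ (B * Q * Bᵀ) *ᵥ Δ) / norm2 Δ ≤ Zf f B Q zs :=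
    le_csSup ⟨_, fun _ ⟨Δ', _, _, hr⟩ => hr ▸ sqrt_dotProduct_mulVec_div_le_specNorm hsymm hidem Δ'⟩
      ⟨Δ, hΔ0, hΔ, rfl⟩
  rwa [sqrt_dotProduct_mulVec_eq_norm2 hsymm hidem, div_le_iff₀ (norm2_pos hΔ0)] at hle

lemma norm2_mulVec_gradient_sub_le_Zf_mul {f' : (Fin k → ℝ) → Fin k → ℝ}
    (hconv : ConvexOn ℝ univ f) (hdiff : ∀ w, HasFDerivAt f (dotCLM (f' w)) w)
    (hsymm : Q.IsSymm) (hidem : IsIdempotentElem Q) (zs x : Fin k → ℝ) :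
    norm2 (Q *ᵥ Bᵀ *ᵥ (f' x - zs)) ≤ Zf f B Q zs * norm2 (f' x - zs) := by
  rw [mulVec_mulVec]
  refine norm2_mulVec_le_Zf_mul hsymm hidem ?_
  rw [add_sub_cancel]
  exact gradient_mem_fenchelDom hconv hdiff x

end Zf

section Optimality

variable {n d : ℕ} {f : (Fin n → ℝ) → ℝ} {f' : (Fin n → ℝ) → Fin n → ℝ}

lemma transpose_mulVec_add_smul_eq_zero_of_isMin {p : ℕ}
    (hdiff : ∀ w, HasFDerivAt f (dotCLM (f' w)) w)
    (B : Matrix (Fin n) (Fin d) ℝ) (C : Matrix (Fin p) (Fin d) ℝ) (lam : ℝ) (x₀ : Fin d → ℝ)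
    (hmin : ∀ x, f (B *ᵥ x₀) + lam / 2 * norm2 (C *ᵥ x₀) ^ 2
      ≤ f (B *ᵥ x) + lam / 2 * norm2 (C *ᵥ x) ^ 2) :
    Bᵀ *ᵥ f' (B *ᵥ x₀) + lam • (Cᵀ *ᵥ (C *ᵥ x₀)) = 0 := by
  set g := Bᵀ *ᵥ f' (B *ᵥ x₀) + lam • (Cᵀ *ᵥ (C *ᵥ x₀)) with hg
  have hline : ∀ {r : ℕ} (M : Matrix (Fin r) (Fin d) ℝ),
      HasDerivAt (fun t : ℝ => M *ᵥ (x₀ + t • g)) (M *ᵥ g) 0 := fun M => by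
    simpa [mulVec_add, mulVec_smul] using
      ((hasDerivAt_id (0 : ℝ)).smul_const (M *ᵥ g)).const_add (M *ᵥ x₀)
  have hfit : HasDerivAt (fun t : ℝ => f (B *ᵥ (x₀ + t • g))) (f' (B *ᵥ x₀) ⬝ᵥ B *ᵥ g) 0 :=
    (hdiff _).comp_hasDerivAt_of_eq (x := 0) (hline B) (by simp)
  have hreg : HasDerivAt (fun t : ℝ => norm2 (C *ᵥ (x₀ + t • g)) ^ 2)
      (2 * (C *ᵥ x₀ ⬝ᵥ C *ᵥ g)) 0 := by
    have := (((WithLp.linearEquiv 2 ℝ (Fin p → ℝ)).symm.toLinearMap.toContinuousLinearMap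
      ).hasFDerivAt.comp_hasDerivAt (0 : ℝ) (hline C)).norm_sq
    simpa [norm2_eq_norm_toLp, EuclideanSpace.inner_toLp_toLp, dotProduct_comm] using this
  have hderiv : HasDerivAt (fun t : ℝ => f (B *ᵥ (x₀ + t • g))
      + lam / 2 * norm2 (C *ᵥ (x₀ + t • g)) ^ 2) (g ⬝ᵥ g) 0 := by
    refine (hfit.add (hreg.const_mul (lam / 2))).congr_deriv ?_
    rw [dotProduct_mulVec, dotProduct_mulVec, ← mulVec_transpose, ← mulVec_transpose]
    nth_rw 3 [hg]
    rw [add_dotProduct, smul_dotProduct, smul_eq_mul]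
    ring
  have hlocal : IsLocalMin (fun t : ℝ => f (B *ᵥ (x₀ + t • g))
      + lam / 2 * norm2 (C *ᵥ (x₀ + t • g)) ^ 2) 0 :=
    Filter.Eventually.of_forall fun t => by simpa using hmin (x₀ + t • g)
  exact dotProduct_self_eq_zero.1 (hlocal.hasDerivAt_eq_zero hderiv)

lemma transpose_mulVec_eq_neg_smul_of_isMin (hdiff : ∀ w, HasFDerivAt f (dotCLM (f' w)) w)
    (A : Matrix (Fin n) (Fin d) ℝ) (lam : ℝ) (xs : Fin d → ℝ)
    (hxs : ∀ x, f (A *ᵥ xs) + lam / 2 * norm2 xs ^ 2 ≤ f (A *ᵥ x) + lam / 2 * norm2 x ^ 2) :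
    Aᵀ *ᵥ f' (A *ᵥ xs) = -(lam • xs) := by
  have := transpose_mulVec_add_smul_eq_zero_of_isMin hdiff A (1 : Matrix (Fin d) (Fin d) ℝ)
    lam xs (by simpa using hxs)
  simpa [eq_neg_iff_add_eq_zero] using this

lemma IsOrthProj.mulVec_transpose_mulVec_eq_neg_smul_of_isMin {m : ℕ}
    {S : Matrix (Fin d) (Fin m) ℝ} {P : Matrix (Fin d) (Fin d) ℝ} (hP : IsOrthProj S P)
    (hdiff : ∀ w, HasFDerivAt f (dotCLM (f' w)) w) (A : Matrix (Fin n) (Fin d) ℝ) (lam : ℝ)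
    (αs : Fin m → ℝ)
    (hαs : ∀ α, f ((A * S) *ᵥ αs) + lam / 2 * norm2 (S *ᵥ αs) ^ 2
      ≤ f ((A * S) *ᵥ α) + lam / 2 * norm2 (S *ᵥ α) ^ 2) :
    P *ᵥ (Aᵀ *ᵥ f' ((A * S) *ᵥ αs)) = -(lam • S *ᵥ αs) := by
  have := transpose_mulVec_add_smul_eq_zero_of_isMin hdiff (A * S) S lam αs hαs
  rw [transpose_mul, ← mulVec_mulVec, ← mulVec_smul, ← mulVec_add] at this
  have hP0 := hP.mulVec_eq_zero this
  rwa [mulVec_add, mulVec_smul, hP.mulVec_mulVec_self, add_eq_zero_iff_eq_neg] at hP0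

end Optimality

/-- The estimate behind the theorem, with `x = x*`, `u = Sα*`, `Δ = ∇f(ASα*) - ∇f(Ax*)` and
`w = AᵀΔ`. -/
lemma inv_mul_norm2_le_of_sketch {k q : ℕ} {P : Matrix (Fin q) (Fin q) ℝ} (hsymm : P.IsSymm)
    (hidem : IsIdempotentElem P) {lam μ Z : ℝ} (hlam : 0 < lam) (hμ : 0 < μ) (hZ₀ : 0 ≤ Z)
    (hZ : 2 * μ * Z ^ 2 ≤ lam) {Δ : Fin k → ℝ} {w x u : Fin q → ℝ} (hu : P *ᵥ u = u)
    (hw : P *ᵥ w = lam • (P *ᵥ x - u)) (hco : norm2 Δ ^ 2 ≤ μ * (w ⬝ᵥ (u - x)))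
    (hQw : norm2 ((1 - P) *ᵥ w) ≤ Z * norm2 Δ) :
    lam⁻¹ * norm2 w ≤ √(μ / (2 * lam)) * Z * norm2 ((1 - P) *ᵥ x) := by
  have hQsymm : (1 - P).IsSymm := isSymm_one.sub hsymm
  have hsplit : lam * (w ⬝ᵥ (u - x))
      = -norm2 (P *ᵥ w) ^ 2 - lam * ((1 - P) *ᵥ w ⬝ᵥ (1 - P) *ᵥ x) := by
    have hux : u - x = P *ᵥ (u - P *ᵥ x) - (1 - P) *ᵥ x := by
      rw [mulVec_sub, hu, mulVec_mulVec, hidem.eq, sub_mulVec, one_mulVec]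
      abel
    rw [hux, dotProduct_sub, ← mulVec_dotProduct_of_isSymm hsymm w,
      ← mulVec_dotProduct_mulVec_of_isSymm hQsymm hidem.one_sub w, norm2_sq, hw,
      ← neg_sub (P *ᵥ x) u]
    simp only [smul_dotProduct, dotProduct_smul, dotProduct_neg, smul_eq_mul]
    ring
  set a := norm2 Δ
  set t := norm2 ((1 - P) *ᵥ w)
  set c := norm2 ((1 - P) *ᵥ x)
  have hcs : -((1 - P) *ᵥ w ⬝ᵥ (1 - P) *ᵥ x) ≤ t * c :=
    (neg_le_abs _).trans (abs_dotProduct_le_norm2_mul_norm2 _ _)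
  have hkey : lam * a ^ 2 + μ * norm2 (P *ᵥ w) ^ 2 ≤ lam * μ * t * c := by
    nlinarith [mul_le_mul_of_nonneg_left hco hlam.le, mul_le_mul_of_nonneg_left hcs hlam.le]
  have ht : t ^ 2 ≤ Z ^ 2 * a ^ 2 := by
    rw [← mul_pow]; exact pow_le_pow_left₀ (norm2_nonneg _) hQw 2
  have hc : 0 ≤ c := norm2_nonneg _
  have hlμc : 0 ≤ lam * μ * c := mul_nonneg (mul_pos hlam hμ).le hc
  have hμw : μ * norm2 w ^ 2 ≤ lam * μ ^ 2 * (Z * c) ^ 2 / 2 := by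
    rw [norm2_sq_eq_add_of_isSymm hsymm hidem w]
    nlinarith [mul_le_mul_of_nonneg_right hZ (sq_nonneg a), mul_le_mul_of_nonneg_left ht hμ.le,
      mul_le_mul_of_nonneg_left hQw hlμc,
      mul_nonneg hlam.le (sq_nonneg (a - μ * Z * c))]
  rw [← pow_le_pow_iff_left₀ (mul_nonneg (inv_pos.2 hlam).le (norm2_nonneg w))
    (mul_nonneg (mul_nonneg (Real.sqrt_nonneg _) hZ₀) hc) two_ne_zero, mul_pow, mul_pow,
    mul_pow, Real.sq_sqrt (by positivity)]
  have hw : norm2 w ^ 2 ≤ lam * μ * (Z * c) ^ 2 / 2 :=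
    le_of_mul_le_mul_left (hμw.trans_eq (by ring)) hμ
  calc lam⁻¹ ^ 2 * norm2 w ^ 2 ≤ lam⁻¹ ^ 2 * (lam * μ * (Z * c) ^ 2 / 2) := by gcongr
    _ = μ / (2 * lam) * Z ^ 2 * c ^ 2 := by field_simp

/-- deterministic bound via the spectral norm: if `λ ≥ 2 μ Z_f²`, then
for any minimizer `αs` of the sketched program, the approximate solution
`x̃ = -λ⁻¹ Aᵀ ∇f(A S αs)` satisfies `‖x̃ - x*‖₂ ≤ √(μ/(2λ)) ‖P_S^⊥ Aᵀ‖₂ ‖x*‖₂`. -/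
theorem statement_3 {n d m : ℕ} (f : (Fin n → ℝ) → ℝ) (f' : (Fin n → ℝ) → Fin n → ℝ)
    (A : Matrix (Fin n) (Fin d) ℝ) (μ lam : ℝ)
    (hμ : 0 < μ) (hlam : 0 < lam)
    (hconv : ConvexOn ℝ Set.univ f)
    (hdiff : ∀ w, HasFDerivAt f (dotCLM (f' w)) w)
    (hsmooth : ∀ w v, norm2 (f' w - f' v) ≤ μ * norm2 (w - v))
    (S : Matrix (Fin d) (Fin m) ℝ) (P : Matrix (Fin d) (Fin d) ℝ)
    (hP : IsOrthProj S P)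
    (xs : Fin d → ℝ)
    (hxs : ∀ x, f (A.mulVec xs) + lam / 2 * norm2 xs ^ 2
        ≤ f (A.mulVec x) + lam / 2 * norm2 x ^ 2)
    (hZ : 2 * μ * Zf f A (1 - P) (f' (A.mulVec xs)) ^ 2 ≤ lam)
    (αs : Fin m → ℝ)
    (hαs : ∀ α, f ((A * S).mulVec αs) + lam / 2 * norm2 (S.mulVec αs) ^ 2
        ≤ f ((A * S).mulVec α) + lam / 2 * norm2 (S.mulVec α) ^ 2) :
    norm2 (-(lam⁻¹ • Aᵀ.mulVec (f' ((A * S).mulVec αs))) - xs)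
      ≤ Real.sqrt (μ / (2 * lam)) * specNorm ((1 - P) * Aᵀ) * norm2 xs := by
  have hsymm : P.IsSymm := hP.1
  have hidem : IsIdempotentElem P := hP.2.1
  set zs := f' (A *ᵥ xs)
  set zt := f' ((A * S) *ᵥ αs)
  have hw : Aᵀ *ᵥ (zt - zs) = Aᵀ *ᵥ zt + lam • xs := by
    rw [mulVec_sub, transpose_mulVec_eq_neg_smul_of_isMin hdiff A lam xs hxs, sub_neg_eq_add]
  have herr : -(lam⁻¹ • Aᵀ *ᵥ zt) - xs = (-lam⁻¹) • Aᵀ *ᵥ (zt - zs) := by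
    rw [hw, smul_add, smul_smul, neg_mul, inv_mul_cancel₀ hlam.ne', neg_smul, neg_smul, one_smul,
      sub_eq_add_neg]
  have hPw : P *ᵥ Aᵀ *ᵥ (zt - zs) = lam • (P *ᵥ xs - S *ᵥ αs) := by
    rw [hw, mulVec_add, hP.mulVec_transpose_mulVec_eq_neg_smul_of_isMin hdiff A lam αs hαs,
      mulVec_smul, smul_sub]
    abel
  have hco : norm2 (zt - zs) ^ 2 ≤ μ * (Aᵀ *ᵥ (zt - zs) ⬝ᵥ (S *ᵥ αs - xs)) := by
    have := norm2_sub_sq_le_mul_dotProduct hconv hdiff hsmooth hμ ((A * S) *ᵥ αs) (A *ᵥ xs)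
    rwa [show (A * S) *ᵥ αs - A *ᵥ xs = A *ᵥ (S *ᵥ αs - xs) by rw [mulVec_sub, mulVec_mulVec],
      dotProduct_mulVec, ← mulVec_transpose] at this
  have hQw := norm2_mulVec_gradient_sub_le_Zf_mul (B := A) hconv hdiff (isSymm_one.sub hsymm)
    hidem.one_sub zs ((A * S) *ᵥ αs)
  calc norm2 (-(lam⁻¹ • Aᵀ *ᵥ zt) - xs) = lam⁻¹ * norm2 (Aᵀ *ᵥ (zt - zs)) := by
        rw [herr, norm2_smul, abs_neg, abs_of_pos (inv_pos.2 hlam)]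
    _ ≤ √(μ / (2 * lam)) * Zf f A (1 - P) zs * norm2 ((1 - P) *ᵥ xs) :=
        inv_mul_norm2_le_of_sketch hsymm hidem hlam hμ (Zf_nonneg zs) hZ
          (hP.mulVec_mulVec_self αs) hPw hco hQw
    _ ≤ √(μ / (2 * lam)) * specNorm ((1 - P) * Aᵀ) * norm2 xs := by
        gcongr
        exacts [norm2_nonneg _, mul_nonneg (Real.sqrt_nonneg _) (specNorm_nonneg _),
          Zf_le_specNorm (isSymm_one.sub hsymm) hidem.one_sub zs,
          norm2_one_sub_mulVec_le hsymm hidem xs]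

end Sketch
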